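/- Let τ := β₁₂ ∘ β₂₃ ∘ β₃₄ ∘ β₄₁ and let σ := β₁₄ ∘ β₁₃ ∘ β₁₂ ∘ τ ∘ τ (a composition of 11 Brun substitutions). For any directive sequence (τ_n)_{n≥0} in which each τ_n is a Brun substitution β_ij, and any n such that τ_{[n+1,n+11]} = σ (with the factors matching in order), the composition τ_{[n+1,n+11]} is a word builder at level n: whenever a precedes b at level n, ab is a factor of σ(c) for some c ∈ {1,2,3,4}. -/
import Mathlib


open MeasureTheory

variable {A : Type*}

/-- Apply a substitution to a word by concatenation. -/
def applyWord (σ : A → List A) (u : List A) : List A := u.flatMap σ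

/-- Composition of substitutions: first apply `τ₂`, then the extension of `τ₁`. -/
def substComp (τ₁ τ₂ : A → List A) : A → List A := fun a => applyWord τ₁ (τ₂ a)

/-- `substInterval τ m n` is `τ_{[m,n]} = τ_m ∘ τ_{m+1} ∘ ⋯ ∘ τ_n` (the identity if `m > n`). -/
def substInterval (τ : ℕ → A → List A) (m n : ℕ) : A → List A :=
  ((List.range (n + 1 - m)).map fun i => τ (m + i)).foldr substComp fun a => [a]

/-- `wseq τ n a = w_n(a) = τ_{[0,n]}(a)`. -/
def wseq (τ : ℕ → A → List A) (n : ℕ) : A → List A := substInterval τ 0 n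

/-- The substitution matrix: `M_σ[a,b]` is the number of occurrences of `a` in `σ b`. -/
def substMatrix [DecidableEq A] (σ : A → List A) : Matrix A A ℕ :=
  Matrix.of fun a b => (σ b).count a

/-- `M_{[m,n]} = M_{τ_m} ⋯ M_{τ_n}`. -/
def matInterval [Fintype A] [DecidableEq A] (τ : ℕ → A → List A) (m n : ℕ) :
    Matrix A A ℕ :=
  ((List.range (n + 1 - m)).map fun i => substMatrix (τ (m + i))).prod

/-- The language of a directive sequence: factors of the words `w_n(a)`. -/
def SadicLang (τ : ℕ → A → List A) : Set (List A) :=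
  {u | ∃ (n : ℕ) (a : A), u <:+: wseq τ n a}

/-- A finite word occurs as a factor of a two-sided sequence. -/
def FactorOf (u : List A) (x : ℤ → A) : Prop :=
  ∃ k : ℤ, u = (List.range u.length).map fun i => x (k + (i : ℤ))

/-- The S-adic subshift generated by a directive sequence. -/
def SadicShift (τ : ℕ → A → List A) : Set (ℤ → A) :=
  {x | ∀ u : List A, FactorOf u x → u ∈ SadicLang τ}

/-- The shift map on `A^ℤ`. -/
def shift (x : ℤ → A) : ℤ → A := fun n => x (n + 1)

/-- The cylinder set `{x : x₁ x₂ ⋯ x_{|w|} = w}`. -/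
def cylSet (w : List A) : Set (ℤ → A) :=
  {x | (List.range w.length).map (fun i => x (1 + (i : ℤ))) = w}

/-- `a` precedes `b` at level `n`: `ab` is a factor of `τ_{[n+1,n+m]}(c)` for some `m ≥ 1`, `c`. -/
def Precedes (τ : ℕ → A → List A) (n : ℕ) (a b : A) : Prop :=
  ∃ m : ℕ, 1 ≤ m ∧ ∃ c : A, [a, b] <:+: substInterval τ (n + 1) (n + m) c

/-- `τ_{[n+1,n+ℓ]}` is a word builder at level `n`. -/
def WordBuilder (τ : ℕ → A → List A) (n ℓ : ℕ) : Prop :=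
  ∀ a b : A, Precedes τ n a b →
    ∃ c : A, [a, b] <:+: substInterval τ (n + 1) (n + ℓ) c

/-- The Brun substitution `β_ij : j ↦ ij, k ↦ k (k ≠ j)` on `{1,2,3,4}`
(letters `1,2,3,4` encoded as `0,1,2,3`). -/
def brun (i j : Fin 4) : Fin 4 → List (Fin 4) := fun k => if k = j then [i, j] else [k]

/-- `τ = β₁₂ ∘ β₂₃ ∘ β₃₄ ∘ β₄₁`. -/
def brunTau : Fin 4 → List (Fin 4) :=
  substComp (brun 0 1) (substComp (brun 1 2) (substComp (brun 2 3) (brun 3 0)))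

/-- `σ = β₁₄ ∘ β₁₃ ∘ β₁₂ ∘ τ ∘ τ`. -/
def brunSigma : Fin 4 → List (Fin 4) :=
  substComp (brun 0 3) (substComp (brun 0 2) (substComp (brun 0 1)
    (substComp brunTau brunTau)))


section auxStmt11
variable {A : Type*}

lemma substComp_id' (f : A → List A) : substComp f (fun a => [a]) = f := by
  funext a; simp [substComp, applyWord]

lemma substComp_assoc' (f g h : A → List A) :
    substComp (substComp f g) h = substComp f (substComp g h) := by
  funext a; simp only [substComp, applyWord, List.flatMap_assoc]; rfl

lemma foldr_substComp_append' (l1 l2 : List (A → List A)) :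
    (l1 ++ l2).foldr substComp (fun a => [a]) =
      substComp (l1.foldr substComp (fun a => [a])) (l2.foldr substComp (fun a => [a])) := by
  induction l1 with
  | nil => simp [substComp_id']; funext a; simp [substComp, applyWord]
  | cons f l ih => simp [List.foldr_cons, ih, substComp_assoc']

lemma substInterval_split' (τ : ℕ → A → List A) {m k n : ℕ} (h1 : m ≤ k + 1) (h2 : k ≤ n) :
    substInterval τ m n = substComp (substInterval τ m k) (substInterval τ (k + 1) n) := by
  unfold substInterval
  have harith : n + 1 - m = (k + 1 - m) + (n + 1 - (k + 1)) := by omega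
  rw [harith, List.range_add, List.map_append, foldr_substComp_append']
  rw [List.map_map]
  have hmap : List.map ((fun i => τ (m + i)) ∘ fun x => k + 1 - m + x)
      (List.range (n + 1 - (k + 1))) =
      List.map (fun i => τ (k + 1 + i)) (List.range (n + 1 - (k + 1))) := by
    apply List.map_congr_left
    intro i _
    show τ (m + (k + 1 - m + i)) = τ (k + 1 + i)
    have harg : m + (k + 1 - m + i) = k + 1 + i := by omega
    rw [harg]
  rw [hmap]

lemma mem_foldr_self' (l : List (A → List A)) (hl : ∀ f ∈ l, ∀ a, a ∈ f a) (a : A) :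
    a ∈ l.foldr substComp (fun a => [a]) a := by
  induction l with
  | nil => simp
  | cons f l ih =>
    simp only [List.foldr_cons, substComp, applyWord]
    exact List.mem_flatMap.2 ⟨a, ih (fun g hg => hl g (by simp [hg])), hl f (by simp) a⟩

lemma infix_pair_append' {a b : A} : ∀ {u v : List A}, [a, b] <:+: u ++ v →
    [a, b] <:+: u ∨ [a, b] <:+: v ∨ (u.getLast? = some a ∧ v.head? = some b) := by
  intro u
  induction u with
  | nil => intro v h; exact Or.inr (Or.inl (by simpa using h))
  | cons x u ih =>
    intro v h
    rw [List.cons_append, List.infix_cons_iff] at h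
    rcases h with h | h
    · rcases h with ⟨t, ht⟩
      simp only [List.cons_append, List.nil_append, List.cons.injEq] at ht
      obtain ⟨rfl, ht2⟩ := ht
      cases u with
      | nil =>
        right; right
        refine ⟨rfl, ?_⟩
        cases v with
        | nil => simp at ht2
        | cons y v =>
          simp only [List.nil_append, List.cons.injEq] at ht2
          simp [ht2.1]
      | cons y u =>
        left
        simp only [List.cons_append, List.cons.injEq] at ht2
        exact ⟨[], u, by simp [ht2.1]⟩
    · rcases ih h with h' | h' | h'
      · exact Or.inl (h'.trans (List.suffix_cons x u).isInfix)
      · exact Or.inr (Or.inl h')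
      · right; right
        refine ⟨?_, h'.2⟩
        cases u with
        | nil => simp at h'
        | cons y u => rw [List.getLast?_cons_cons]; exact h'.1

end auxStmt11

lemma brun_self_mem (i j k : Fin 4) : k ∈ brun i j k := by
  unfold brun
  split
  · next h => subst h; simp
  · simp

lemma substInterval_self_mem (τ : ℕ → Fin 4 → List (Fin 4))
    (hbrun : ∀ m : ℕ, ∃ i j : Fin 4, i ≠ j ∧ τ m = brun i j) (m n : ℕ) (a : Fin 4) :
    a ∈ substInterval τ m n a := by
  apply mem_foldr_self'
  intro f hf k
  simp only [List.mem_map] at hf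
  obtain ⟨i, -, rfl⟩ := hf
  obtain ⟨p, q, -, hpq⟩ := hbrun (m + i)
  rw [hpq]
  exact brun_self_mem p q k

lemma brunSigma_ne_nil (k : Fin 4) : brunSigma k ≠ [] := by
  fin_cases k <;> decide

set_option maxHeartbeats 1000000 in
lemma brunSigma_getLast? : ∀ x : Fin 4, (brunSigma x).getLast? = some x := by decide

set_option maxHeartbeats 1000000 in
lemma brunSigma_head? : ∀ y : Fin 4, (brunSigma y).head? = some 0 := by decide

set_option maxHeartbeats 1000000 in
lemma brunSigma_pair : ∀ x : Fin 4, [x, 0] <:+: brunSigma 0 := by decide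

lemma brunSigma_boundary : ∀ x y a b : Fin 4,
    (brunSigma x).getLast? = some a → (brunSigma y).head? = some b →
    ∃ c, [a, b] <:+: brunSigma c := by
  intro x y a b ha hb
  rw [brunSigma_getLast?] at ha
  rw [brunSigma_head?] at hb
  have hxa : x = a := Option.some.inj ha
  have h0b : (0 : Fin 4) = b := Option.some.inj hb
  subst hxa
  subst h0b
  exact ⟨0, brunSigma_pair _⟩

lemma brunSigma_key (a b : Fin 4) : ∀ w : List (Fin 4), w ≠ [] →
    [a, b] <:+: applyWord brunSigma w → ∃ c, [a, b] <:+: brunSigma c := by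
  intro w
  induction w with
  | nil => intro h; exact absurd rfl h
  | cons k w ih =>
    intro _ h
    cases w with
    | nil => exact ⟨k, by simpa [applyWord] using h⟩
    | cons k' w =>
      have e : applyWord brunSigma (k :: k' :: w)
          = brunSigma k ++ applyWord brunSigma (k' :: w) := by
        simp [applyWord]
      rw [e] at h
      rcases infix_pair_append' h with h' | h' | h'
      · exact ⟨k, h'⟩
      · exact ih (by simp) h'
      · obtain ⟨z, zs, hz⟩ := List.exists_cons_of_ne_nil (brunSigma_ne_nil k')
        have e2 : applyWord brunSigma (k' :: w)
            = z :: (zs ++ applyWord brunSigma w) := by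
          simp [applyWord, hz]
        have hb : (brunSigma k').head? = some b := by
          rw [e2] at h'
          rw [hz, List.head?_cons]
          simpa using h'.2
        exact brunSigma_boundary k k' a b h'.1 hb

set_option maxHeartbeats 1000000 in
/-- if the directive sequence consists of Brun substitutions and
`τ_{n+1}, …, τ_{n+11}` are, in order, the 11 Brun substitutions composing `σ`,
then `τ_{[n+1,n+11]}` is a word builder at level `n`: whenever `a` precedes `b`
at level `n`, `ab` is a factor of `σ(c)` for some letter `c`. -/
theorem stmt11 (τ : ℕ → Fin 4 → List (Fin 4))
    (hbrun : ∀ m : ℕ, ∃ i j : Fin 4, i ≠ j ∧ τ m = brun i j)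
    (n : ℕ)
    (h1 : τ (n + 1) = brun 0 3) (h2 : τ (n + 2) = brun 0 2) (h3 : τ (n + 3) = brun 0 1)
    (h4 : τ (n + 4) = brun 0 1) (h5 : τ (n + 5) = brun 1 2) (h6 : τ (n + 6) = brun 2 3)
    (h7 : τ (n + 7) = brun 3 0)
    (h8 : τ (n + 8) = brun 0 1) (h9 : τ (n + 9) = brun 1 2) (h10 : τ (n + 10) = brun 2 3)
    (h11 : τ (n + 11) = brun 3 0) :
    WordBuilder τ n 11 ∧
      ∀ a b : Fin 4, Precedes τ n a b → ∃ c : Fin 4, [a, b] <:+: brunSigma c := by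
  have hσ : substInterval τ (n + 1) (n + 11) = brunSigma := by
    unfold substInterval
    rw [show n + 11 + 1 - (n + 1) = 11 by omega]
    rw [show List.range 11 = [0,1,2,3,4,5,6,7,8,9,10] from rfl]
    simp only [List.map_cons, List.map_nil, List.foldr_cons, List.foldr_nil]
    rw [show n + 1 + 0 = n + 1 by omega, show n + 1 + 1 = n + 2 by omega,
        show n + 1 + 2 = n + 3 by omega, show n + 1 + 3 = n + 4 by omega,
        show n + 1 + 4 = n + 5 by omega, show n + 1 + 5 = n + 6 by omega,
        show n + 1 + 6 = n + 7 by omega, show n + 1 + 7 = n + 8 by omega,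
        show n + 1 + 8 = n + 9 by omega, show n + 1 + 9 = n + 10 by omega,
        show n + 1 + 10 = n + 11 by omega, h1, h2, h3, h4, h5, h6, h7, h8, h9, h10, h11]
    funext a
    fin_cases a <;> decide
  have main : ∀ a b : Fin 4, Precedes τ n a b → ∃ c : Fin 4, [a, b] <:+: brunSigma c := by
    rintro a b ⟨m, hm, c, hinf⟩
    by_cases hle : m ≤ 11
    · refine ⟨c, hinf.trans ?_⟩
      rw [← hσ, substInterval_split' τ (m := n + 1) (k := n + m) (n := n + 11)
        (by omega) (by omega)]
      obtain ⟨s, t, hst⟩ :=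
        List.append_of_mem (substInterval_self_mem τ hbrun (n + m + 1) (n + 11) c)
      show substInterval τ (n + 1) (n + m) c <:+:
        applyWord (substInterval τ (n + 1) (n + m)) (substInterval τ (n + m + 1) (n + 11) c)
      rw [hst]
      refine ⟨applyWord (substInterval τ (n + 1) (n + m)) s,
        applyWord (substInterval τ (n + 1) (n + m)) t, ?_⟩
      simp [applyWord]
    · push_neg at hle
      rw [substInterval_split' τ (m := n + 1) (k := n + 11) (n := n + m)
        (by omega) (by omega)] at hinf
      have hc := substInterval_self_mem τ hbrun (n + 11 + 1) (n + m) c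
      have hne : substInterval τ (n + 11 + 1) (n + m) c ≠ [] := List.ne_nil_of_mem hc
      refine brunSigma_key a b _ hne ?_
      rw [← hσ]
      exact hinf
  refine ⟨?_, main⟩
  intro a b hab
  rw [hσ]
  exact main a b hab
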